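/- Monotonicity formula: let Γ_t = γ¹(·,t) ∪ γ²(·,t), t ∈ [0,T), be a family of spoon-shaped networks evolving by curvature with fixed end point P, let x₀ ∈ ℝ², and let ρ_{x₀}(x,t) = exp(−|x−x₀|²/(4(T−t)))/√(4π(T−t)) be the backward heat kernel relative to (x₀,T). Then for every t ∈ [0,T): d/dt ∫_{Γ_t} ρ_{x₀}(x,t) ds = −∫_{Γ_t} | kν + ⟨x−x₀, ν⟩ν/(2(T−t)) |² ρ_{x₀}(x,t) ds + ⟨(P−x₀)/(2(T−t)), τ²(1,t)⟩ ρ_{x₀}(P,t), where τ²(1,t) is the unit tangent vector of γ²(·,t) at the end point P. -/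

import Mathlib

noncomputable section
open scoped RealInnerProductSpace
open MeasureTheory Filter Set

/-- The Euclidean plane. -/
abbrev E2 : Type := EuclideanSpace ℝ (Fin 2)

/-- Counterclockwise rotation of the plane by π/2. -/
def rot (v : E2) : E2 := (WithLp.equiv 2 (Fin 2 → ℝ)).symm ![-(v 1), v 0]

/-- Unit tangent vector `τ = γ_x/|γ_x|` of a curve `γ`. -/
def tangent (γ : ℝ → E2) (x : ℝ) : E2 := ‖deriv γ x‖⁻¹ • deriv γ x

/-- Unit normal vector `ν = R τ` of a curve `γ`. -/
def normal (γ : ℝ → E2) (x : ℝ) : E2 := rot (tangent γ x)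

/-- Curvature `k = ⟨γ_xx, ν⟩/|γ_x|²` of a curve `γ`. -/
def curvature (γ : ℝ → E2) (x : ℝ) : ℝ :=
  ⟪deriv (deriv γ) x, normal γ x⟫ / ‖deriv γ x‖ ^ 2

/-- Arclength derivative `∂_s f = f_x/|γ_x|` of a function `f` along a curve `γ`. -/
def arcDeriv (γ : ℝ → E2) (f : ℝ → ℝ) (x : ℝ) : ℝ := deriv f x / ‖deriv γ x‖

/-- A family of spoon-shaped networks, in the closure of the open convex set `Ω ⊂ ℝ²`
with end point `P ∈ ∂Ω`, evolving by curvature on the time interval `[0,T)`. -/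
structure SpoonFlow (Ω : Set E2) (P : E2) (T : ℝ) where
  /-- the closed curve -/
  γ₁ : ℝ → ℝ → E2
  /-- the non-closed curve -/
  γ₂ : ℝ → ℝ → E2
  isOpen_dom : IsOpen Ω
  convex_dom : Convex ℝ Ω
  smooth₁ : ContDiff ℝ (⊤ : ℕ∞) fun p : ℝ × ℝ => γ₁ p.1 p.2
  smooth₂ : ContDiff ℝ (⊤ : ℕ∞) fun p : ℝ × ℝ => γ₂ p.1 p.2
  regular₁ : ∀ x ∈ Set.Icc (0:ℝ) 1, ∀ t ∈ Set.Ico (0:ℝ) T, deriv (fun y => γ₁ y t) x ≠ 0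
  regular₂ : ∀ x ∈ Set.Icc (0:ℝ) 1, ∀ t ∈ Set.Ico (0:ℝ) T, deriv (fun y => γ₂ y t) x ≠ 0
  mem_closure₁ : ∀ x ∈ Set.Icc (0:ℝ) 1, ∀ t ∈ Set.Ico (0:ℝ) T, γ₁ x t ∈ closure Ω
  mem_closure₂ : ∀ x ∈ Set.Icc (0:ℝ) 1, ∀ t ∈ Set.Ico (0:ℝ) T, γ₂ x t ∈ closure Ω
  closed₁ : ∀ t ∈ Set.Ico (0:ℝ) T, γ₁ 0 t = γ₁ 1 t
  concurrency : ∀ t ∈ Set.Ico (0:ℝ) T, γ₁ 0 t = γ₂ 0 t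
  threePoint_mem : ∀ t ∈ Set.Ico (0:ℝ) T, γ₂ 0 t ∈ Ω
  endPoint : ∀ t ∈ Set.Ico (0:ℝ) T, γ₂ 1 t = P
  endPoint_bdry : P ∈ frontier Ω
  embedded₁ : ∀ t ∈ Set.Ico (0:ℝ) T, ∀ x ∈ Set.Icc (0:ℝ) 1, ∀ y ∈ Set.Icc (0:ℝ) 1,
      γ₁ x t = γ₁ y t → x = y ∨ (x ∈ ({0, 1} : Set ℝ) ∧ y ∈ ({0, 1} : Set ℝ))
  embedded₂ : ∀ t ∈ Set.Ico (0:ℝ) T, Set.InjOn (fun x => γ₂ x t) (Set.Icc (0:ℝ) 1)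
  embedded₁₂ : ∀ t ∈ Set.Ico (0:ℝ) T, ∀ x ∈ Set.Icc (0:ℝ) 1, ∀ y ∈ Set.Icc (0:ℝ) 1,
      γ₁ x t = γ₂ y t → x ∈ ({0, 1} : Set ℝ) ∧ y = 0
  angle : ∀ t ∈ Set.Ico (0:ℝ) T,
      tangent (fun y => γ₁ y t) 0 - tangent (fun y => γ₁ y t) 1
        + tangent (fun y => γ₂ y t) 0 = 0
  motion₁ : ∀ x ∈ Set.Icc (0:ℝ) 1, ∀ t ∈ Set.Ico (0:ℝ) T,
      deriv (fun s => γ₁ x s) t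
        = (‖deriv (fun y => γ₁ y t) x‖ ^ 2)⁻¹ • deriv (deriv (fun y => γ₁ y t)) x
  motion₂ : ∀ x ∈ Set.Icc (0:ℝ) 1, ∀ t ∈ Set.Ico (0:ℝ) T,
      deriv (fun s => γ₂ x s) t
        = (‖deriv (fun y => γ₂ y t) x‖ ^ 2)⁻¹ • deriv (deriv (fun y => γ₂ y t)) x

variable {Ω : Set E2} {P : E2} {T : ℝ}

/-- Length `L₁(t)` of the closed curve. -/
def SpoonFlow.len₁ (Γ : SpoonFlow Ω P T) (t : ℝ) : ℝ :=
  ∫ x in (0:ℝ)..1, ‖deriv (fun y => Γ.γ₁ y t) x‖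

/-- Length `L₂(t)` of the non-closed curve. -/
def SpoonFlow.len₂ (Γ : SpoonFlow Ω P T) (t : ℝ) : ℝ :=
  ∫ x in (0:ℝ)..1, ‖deriv (fun y => Γ.γ₂ y t) x‖

/-- Total length `L(t) = L₁(t) + L₂(t)`. -/
def SpoonFlow.totalLen (Γ : SpoonFlow Ω P T) (t : ℝ) : ℝ := Γ.len₁ t + Γ.len₂ t

/-- `∫_{Γ_t} k² ds`, the integral over the network of the squared curvature. -/
def SpoonFlow.curvSqInt (Γ : SpoonFlow Ω P T) (t : ℝ) : ℝ :=
  (∫ x in (0:ℝ)..1, (curvature (fun y => Γ.γ₁ y t) x) ^ 2 * ‖deriv (fun y => Γ.γ₁ y t) x‖)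
  + ∫ x in (0:ℝ)..1, (curvature (fun y => Γ.γ₂ y t) x) ^ 2 * ‖deriv (fun y => Γ.γ₂ y t) x‖

/-- The backward heat kernel `ρ_{x₀}(x,t)` relative to `(x₀, T)`. -/
def backHeat (x₀ : E2) (T : ℝ) (x : E2) (t : ℝ) : ℝ :=
  Real.exp (-‖x - x₀‖ ^ 2 / (4 * (T - t))) / Real.sqrt (4 * Real.pi * (T - t))

/-- `∫_{Γ_t} ρ_{x₀}(·,t) ds`. -/
def SpoonFlow.heatInt (Γ : SpoonFlow Ω P T) (x₀ : E2) (t : ℝ) : ℝ :=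
  (∫ x in (0:ℝ)..1, backHeat x₀ T (Γ.γ₁ x t) t * ‖deriv (fun y => Γ.γ₁ y t) x‖)
  + ∫ x in (0:ℝ)..1, backHeat x₀ T (Γ.γ₂ x t) t * ‖deriv (fun y => Γ.γ₂ y t) x‖

/-- `∫_{Γ_t} |kν + ⟨x−x₀,ν⟩ν/(2(T−t))|² ρ_{x₀}(·,t) ds`. -/
def SpoonFlow.monInt (Γ : SpoonFlow Ω P T) (x₀ : E2) (t : ℝ) : ℝ :=
  (∫ x in (0:ℝ)..1,
    ‖curvature (fun y => Γ.γ₁ y t) x • normal (fun y => Γ.γ₁ y t) x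
      + ((⟪Γ.γ₁ x t - x₀, normal (fun y => Γ.γ₁ y t) x⟫ / (2 * (T - t)))
          • normal (fun y => Γ.γ₁ y t) x)‖ ^ 2
      * backHeat x₀ T (Γ.γ₁ x t) t * ‖deriv (fun y => Γ.γ₁ y t) x‖)
  + ∫ x in (0:ℝ)..1,
    ‖curvature (fun y => Γ.γ₂ y t) x • normal (fun y => Γ.γ₂ y t) x
      + ((⟪Γ.γ₂ x t - x₀, normal (fun y => Γ.γ₂ y t) x⟫ / (2 * (T - t)))
          • normal (fun y => Γ.γ₂ y t) x)‖ ^ 2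
      * backHeat x₀ T (Γ.γ₂ x t) t * ‖deriv (fun y => Γ.γ₂ y t) x‖

section helpers

theorem rot_smul (c : ℝ) (v : E2) : rot (c • v) = c • rot v := by
  ext i; fin_cases i <;>
    simp [rot, WithLp.equiv_symm_apply, PiLp.toLp_apply] <;> ring

theorem inner_rot_self (a : E2) : ⟪a, rot a⟫ = 0 := by
  simp [rot, PiLp.inner_apply, Fin.sum_univ_two, WithLp.equiv_symm_apply, PiLp.toLp_apply]
  ring

theorem norm_rot (a : E2) : ‖rot a‖ = ‖a‖ := by
  rw [EuclideanSpace.norm_eq, EuclideanSpace.norm_eq]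
  congr 1
  simp [rot, Fin.sum_univ_two, WithLp.equiv_symm_apply, PiLp.toLp_apply]
  ring

theorem continuous_rot : Continuous rot := by
  have h1 : Continuous fun v : E2 => v 1 := by
    exact (continuous_apply 1).comp (PiLp.continuous_ofLp 2 (fun _ : Fin 2 => ℝ))
  have h0 : Continuous fun v : E2 => v 0 := by
    exact (continuous_apply 0).comp (PiLp.continuous_ofLp 2 (fun _ : Fin 2 => ℝ))
  apply (PiLp.continuous_toLp 2 (fun _ : Fin 2 => ℝ)).comp
  apply continuous_pi
  intro i
  fin_cases i
  · exact h1.neg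
  · simpa using h0

theorem inner_decomp {e : E2} (he : ‖e‖ = 1) (v w : E2) :
    ⟪v, w⟫ = ⟪v, e⟫ * ⟪w, e⟫ + ⟪v, rot e⟫ * ⟪w, rot e⟫ := by
  have h : e 0 ^ 2 + e 1 ^ 2 = 1 := by
    have h2 : ‖e‖ ^ 2 = 1 := by rw [he]; norm_num
    rw [EuclideanSpace.norm_eq, Real.sq_sqrt (by positivity)] at h2
    simpa [Fin.sum_univ_two, sq] using h2
  simp only [rot, PiLp.inner_apply, Fin.sum_univ_two, WithLp.equiv_symm_apply, PiLp.toLp_apply,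
    RCLike.inner_apply, conj_trivial, Matrix.cons_val_zero, Matrix.cons_val_one, Matrix.head_cons]
  linear_combination (-(v 0 * w 0 + v 1 * w 1)) * h

theorem sliceX {f : ℝ × ℝ → E2} (hf : ContDiff ℝ (⊤ : ℕ∞) f) (x s : ℝ) :
    HasDerivAt (fun y => f (y, s)) (fderiv ℝ f (x, s) (1, 0)) x := by
  have h1 : HasFDerivAt f (fderiv ℝ f (x, s)) (x, s) :=
    (hf.differentiable (by simp) (x, s)).hasFDerivAt
  have h2 : HasDerivAt (fun y : ℝ => (y, s)) ((1 : ℝ), (0 : ℝ)) x := by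
    simpa using ((hasDerivAt_id x).prodMk (hasDerivAt_const x s))
  exact h1.comp_hasDerivAt x h2

theorem sliceT {f : ℝ × ℝ → E2} (hf : ContDiff ℝ (⊤ : ℕ∞) f) (x s : ℝ) :
    HasDerivAt (fun u => f (x, u)) (fderiv ℝ f (x, s) (0, 1)) s := by
  have h1 : HasFDerivAt f (fderiv ℝ f (x, s)) (x, s) :=
    (hf.differentiable (by simp) (x, s)).hasFDerivAt
  have h2 : HasDerivAt (fun u : ℝ => (x, u)) ((0 : ℝ), (1 : ℝ)) s := by
    simpa using ((hasDerivAt_const s x).prodMk (hasDerivAt_id s))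
  exact h1.comp_hasDerivAt s h2

theorem smoothA {f : ℝ × ℝ → E2} (hf : ContDiff ℝ (⊤ : ℕ∞) f) (v : ℝ × ℝ) :
    ContDiff ℝ (⊤ : ℕ∞) (fun p => fderiv ℝ f p v) :=
  (hf.fderiv_right (by simp)).clm_apply contDiff_const

theorem symm2 {f : ℝ × ℝ → E2} (hf : ContDiff ℝ (⊤ : ℕ∞) f) (p : ℝ × ℝ) (v w : ℝ × ℝ) :
    fderiv ℝ (fun q => fderiv ℝ f q v) p w = fderiv ℝ (fun q => fderiv ℝ f q w) p v := by
  have hd : ∀ q, HasFDerivAt f (fderiv ℝ f q) q := fun q =>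
    (hf.differentiable (by simp) q).hasFDerivAt
  have h2 : HasFDerivAt (fderiv ℝ f) (fderiv ℝ (fderiv ℝ f) p) p :=
    (((hf.fderiv_right (m := (⊤ : ℕ∞)) ((by simp))).differentiable (by simp)) p).hasFDerivAt
  have hs := second_derivative_symmetric hd h2 v w
  have e1 : fderiv ℝ (fun q => fderiv ℝ f q v) p w = fderiv ℝ (fderiv ℝ f) p w v := by
    rw [fderiv_clm_apply (h2.differentiableAt) (differentiableAt_const v)]; simp
  have e2 : fderiv ℝ (fun q => fderiv ℝ f q w) p v = fderiv ℝ (fderiv ℝ f) p v w := by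
    rw [fderiv_clm_apply (h2.differentiableAt) (differentiableAt_const w)]; simp
  rw [e1, e2, hs]

end helpers

section helpers2

theorem hasDerivAt_norm_comp {u : ℝ → E2} {u' : E2} {s : ℝ}
    (h : HasDerivAt u u' s) (hne : u s ≠ 0) :
    HasDerivAt (fun r => ‖u r‖) (⟪u', u s⟫ / ‖u s‖) s := by
  have hnz : ‖u s‖ ≠ 0 := norm_ne_zero_iff.mpr hne
  have h1 : HasDerivAt (fun r => ‖u r‖ ^ 2) (2 * ⟪u s, u'⟫) s := h.norm_sq
  have h2 := h1.sqrt (pow_ne_zero 2 hnz)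
  have h3 : ∀ r, Real.sqrt (‖u r‖ ^ 2) = ‖u r‖ := fun r => by
    rw [Real.sqrt_sq (norm_nonneg _)]
  simp only [h3] at h2
  convert h2 using 1
  rw [real_inner_comm]
  ring

theorem hasDerivAt_backHeat {x₀ : E2} {T : ℝ} {c : ℝ → E2} {c' : E2} {θ : ℝ → ℝ} {θ' s : ℝ}
    (hc : HasDerivAt c c' s) (hθ : HasDerivAt θ θ' s) (hlt : θ s < T) :
    HasDerivAt (fun r => backHeat x₀ T (c r) (θ r))
      (backHeat x₀ T (c s) (θ s) *
        ((-(2 * ⟪c s - x₀, c'⟫) * (T - θ s) - ‖c s - x₀‖ ^ 2 * θ') / (4 * (T - θ s) ^ 2)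
          + θ' / (2 * (T - θ s)))) s := by
  have hq : (0:ℝ) < T - θ s := by linarith
  have hπ := Real.pi_pos
  have hz : HasDerivAt (fun r => c r - x₀) c' s := hc.sub_const x₀
  have hnum : HasDerivAt (fun r => -‖c r - x₀‖ ^ 2) (-(2 * ⟪c s - x₀, c'⟫)) s := hz.norm_sq.neg
  have hden : HasDerivAt (fun r => 4 * (T - θ r)) (4 * (-θ')) s := by
    simpa using (((hasDerivAt_const s T).sub hθ).const_mul 4)
  have hA : HasDerivAt (fun r => -‖c r - x₀‖ ^ 2 / (4 * (T - θ r)))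
      ((-(2 * ⟪c s - x₀, c'⟫) * (4 * (T - θ s)) - (-‖c s - x₀‖ ^ 2) * (4 * (-θ'))) /
        (4 * (T - θ s)) ^ 2) s := hnum.div hden (by positivity)
  have hE := hA.exp
  have hB : HasDerivAt (fun r => 4 * Real.pi * (T - θ r)) (4 * Real.pi * (-θ')) s := by
    simpa using (((hasDerivAt_const s T).sub hθ).const_mul (4 * Real.pi))
  have hS : HasDerivAt (fun r => Real.sqrt (4 * Real.pi * (T - θ r)))
      ((4 * Real.pi * (-θ')) / (2 * Real.sqrt (4 * Real.pi * (T - θ s)))) s :=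
    hB.sqrt (by positivity)
  have hsq : Real.sqrt (4 * Real.pi * (T - θ s)) ≠ 0 := by positivity
  have hD : HasDerivAt (fun r => backHeat x₀ T (c r) (θ r)) _ s := hE.div hS hsq
  convert hD using 1
  unfold backHeat
  have h2 : Real.sqrt (4 * Real.pi * (T - θ s)) ^ 2 = 4 * Real.pi * (T - θ s) :=
    Real.sq_sqrt (by positivity)
  set q := T - θ s with hqdef
  set S := Real.sqrt (4 * Real.pi * q) with hSdef
  set Ex := Real.exp (-‖c s - x₀‖ ^ 2 / (4 * q)) with hExdef
  set i := (⟪c s - x₀, c'⟫ : ℝ) with hidef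
  set r := ‖c s - x₀‖ ^ 2 with hrdef
  have h4 : 4 * Real.pi = S ^ 2 / q := by
    rw [h2]; field_simp
  rw [h4]
  field_simp
  ring

theorem param_hasDerivAt {F Φ : ℝ → ℝ → ℝ} {t₀ : ℝ} {V : Set (ℝ × ℝ)}
    (hV : IsOpen V) (hsub : Icc (0:ℝ) 1 ×ˢ {t₀} ⊆ V)
    (hF : ContinuousOn (fun p : ℝ × ℝ => F p.1 p.2) V)
    (hΦ : ContinuousOn (fun p : ℝ × ℝ => Φ p.1 p.2) V)
    (hdiff : ∀ p ∈ V, HasDerivAt (fun u => F p.1 u) (Φ p.1 p.2) p.2) :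
    HasDerivAt (fun s => ∫ x in (0:ℝ)..1, F x s) (∫ x in (0:ℝ)..1, Φ x t₀) t₀ := by
  have hKc : IsCompact (Icc (0:ℝ) 1 ×ˢ {t₀}) := (isCompact_Icc).prod isCompact_singleton
  obtain ⟨ε, hε, hth⟩ := hKc.exists_thickening_subset_open hV hsub
  set δ := ε / 2 with hδ
  have hδ0 : 0 < δ := by positivity
  have hmem : ∀ x ∈ Icc (0:ℝ) 1, ∀ s ∈ Metric.closedBall t₀ δ, (x, s) ∈ V := by
    intro x hx s hs
    apply hth
    rw [Metric.mem_thickening_iff]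
    refine ⟨(x, t₀), mem_prod.mpr ⟨hx, rfl⟩, ?_⟩
    rw [Prod.dist_eq]
    have h1 : dist s t₀ ≤ δ := Metric.mem_closedBall.mp hs
    have h2 : dist x x = 0 := dist_self x
    rw [h2]
    exact max_lt (by linarith) (by simp [hδ] at h1 ⊢; linarith)
  have hK2 : IsCompact (Icc (0:ℝ) 1 ×ˢ Metric.closedBall t₀ δ) :=
    isCompact_Icc.prod (isCompact_closedBall t₀ δ)
  have hK2V : Icc (0:ℝ) 1 ×ˢ Metric.closedBall t₀ δ ⊆ V := fun p hp =>
    hmem p.1 hp.1 p.2 hp.2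
  obtain ⟨C, hC⟩ := hK2.exists_bound_of_continuousOn (hΦ.mono hK2V)
  have hIoc : ∀ x ∈ Set.uIoc (0:ℝ) 1, x ∈ Icc (0:ℝ) 1 := by
    intro x hx
    rw [uIoc_of_le (by norm_num : (0:ℝ) ≤ 1)] at hx
    exact ⟨le_of_lt hx.1, hx.2⟩
  have hcont_slice : ∀ s ∈ Metric.closedBall t₀ δ,
      ContinuousOn (fun x => F x s) (Icc (0:ℝ) 1) := by
    intro s hs
    have : ContinuousOn (fun x : ℝ => (x, s)) (Icc (0:ℝ) 1) :=
      (continuous_id.prodMk continuous_const).continuousOn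
    exact hF.comp this (fun x hx => hmem x hx s hs)
  have key := intervalIntegral.hasDerivAt_integral_of_dominated_loc_of_deriv_le
      (F := fun s x => F x s) (F' := fun s x => Φ x s) (x₀ := t₀) (a := (0:ℝ)) (b := 1)
      (bound := fun _ => C) (μ := volume) (s := Metric.ball t₀ δ) (Metric.ball_mem_nhds t₀ hδ0)
      ?_ ?_ ?_ ?_ ?_ ?_
  · exact key.2
  · filter_upwards [Metric.closedBall_mem_nhds t₀ hδ0] with s hs
    exact ((hcont_slice s hs).mono (fun x hx => hIoc x hx)).aestronglyMeasurable
      measurableSet_uIoc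
  · apply ContinuousOn.intervalIntegrable
    rw [uIcc_of_le (by norm_num : (0:ℝ) ≤ 1)]
    exact hcont_slice t₀ (Metric.mem_closedBall_self hδ0.le)
  · have : ContinuousOn (fun x => Φ x t₀) (Icc (0:ℝ) 1) := by
      have hc : ContinuousOn (fun x : ℝ => (x, t₀)) (Icc (0:ℝ) 1) :=
        (continuous_id.prodMk continuous_const).continuousOn
      exact hΦ.comp hc (fun x hx => hmem x hx t₀ (Metric.mem_closedBall_self hδ0.le))
    exact (this.mono (fun x hx => hIoc x hx)).aestronglyMeasurable measurableSet_uIoc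
  · filter_upwards with x hx s hs
    exact hC (x, s) ⟨hIoc x hx, Metric.ball_subset_closedBall hs⟩
  · exact intervalIntegrable_const
  · filter_upwards with x hx s hs
    exact hdiff (x, s) (hmem x (hIoc x hx) s (Metric.ball_subset_closedBall hs))

end helpers2


/-- boundary function appearing in the monotonicity formula -/
def bdry (x₀ : E2) (T : ℝ) (γ : ℝ → ℝ → E2) (t₀ y : ℝ) : ℝ :=
  backHeat x₀ T (γ y t₀) t₀ *
    ⟪deriv (fun s => γ y s) t₀ + (2 * (T - t₀))⁻¹ • (γ y t₀ - x₀),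
      tangent (fun y' => γ y' t₀) y⟫


theorem inner_decomp' (e v w : E2) :
    ⟪v, w⟫ * ‖e‖ ^ 2 = ⟪v, e⟫ * ⟪w, e⟫ + ⟪v, rot e⟫ * ⟪w, rot e⟫ := by
  have h : ‖e‖ ^ 2 = e 0 ^ 2 + e 1 ^ 2 := by
    rw [EuclideanSpace.norm_eq, Real.sq_sqrt (by positivity)]
    simp [Fin.sum_univ_two, sq]
  rw [h]
  simp only [rot, PiLp.inner_apply, Fin.sum_univ_two, WithLp.equiv_symm_apply, PiLp.toLp_apply,
    RCLike.inner_apply, conj_trivial, Matrix.cons_val_zero, Matrix.cons_val_one,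
    Matrix.head_cons]
  ring

theorem key_algebra (q : ℝ) (hq : 0 < q) (rn : ℝ) (av zv Wv mv bv : E2)
    (hne : ‖av‖ ≠ 0) (hbv : bv = (‖av‖ ^ 2)⁻¹ • Wv) :
    rn * ((-(2 * ⟪zv, bv⟫) * q - ‖zv‖ ^ 2 * 1) / (4 * q ^ 2) + 1 / (2 * q)) * ‖av‖
      + rn * (⟪mv, av⟫ / ‖av‖)
    = (rn * ((-(2 * ⟪zv, av⟫) * q - ‖zv‖ ^ 2 * 0) / (4 * q ^ 2) + 0 / (2 * q))
          * ⟪bv + (2 * q)⁻¹ • zv, ‖av‖⁻¹ • av⟫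
        + rn * (⟪bv + (2 * q)⁻¹ • zv,
              ‖av‖⁻¹ • Wv + (-(⟪Wv, av⟫ / ‖av‖) / ‖av‖ ^ 2) • av⟫
            + ⟪mv + (2 * q)⁻¹ • av, ‖av‖⁻¹ • av⟫))
      - (⟪Wv, rot (‖av‖⁻¹ • av)⟫ / ‖av‖ ^ 2
          + ⟪zv, rot (‖av‖⁻¹ • av)⟫ / (2 * q)) ^ 2 * rn * ‖av‖ := by
  have hn2 : (‖av‖:ℝ) ^ 2 ≠ 0 := pow_ne_zero 2 hne
  have h2' : ⟪zv, Wv⟫ = (⟪zv, av⟫ * ⟪Wv, av⟫ + ⟪zv, rot av⟫ * ⟪Wv, rot av⟫) / ‖av‖ ^ 2 := by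
    rw [eq_div_iff hn2]
    exact inner_decomp' av zv Wv
  have h3' : ‖zv‖ ^ 2 = (⟪zv, av⟫ ^ 2 + ⟪zv, rot av⟫ ^ 2) / ‖av‖ ^ 2 := by
    rw [eq_div_iff hn2, ← real_inner_self_eq_norm_sq]
    rw [inner_decomp' av zv zv]
    ring
  have h4' : ⟪Wv, Wv⟫ = (⟪Wv, av⟫ ^ 2 + ⟪Wv, rot av⟫ ^ 2) / ‖av‖ ^ 2 := by
    rw [eq_div_iff hn2]
    have h := inner_decomp' av Wv Wv
    rw [h]
    ring
  have haa : ⟪av, av⟫ = ‖av‖ ^ 2 := real_inner_self_eq_norm_sq _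
  have h6 : ⟪av, rot av⟫ = 0 := inner_rot_self av
  rw [hbv]
  simp only [rot_smul, inner_add_left, inner_add_right, real_inner_smul_left,
    real_inner_smul_right]
  simp only [h2', h3', h4', haa, h6]
  field_simp
  ring

set_option maxHeartbeats 2000000 in
theorem one_curve {γ : ℝ → ℝ → E2} {T t₀ : ℝ} (x₀ : E2)
    (hγ : ContDiff ℝ (⊤ : ℕ∞) fun p : ℝ × ℝ => γ p.1 p.2)
    (ht0 : t₀ < T)
    (hreg : ∀ x ∈ Icc (0:ℝ) 1, deriv (fun y => γ y t₀) x ≠ 0)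
    (hmot : ∀ x ∈ Icc (0:ℝ) 1, deriv (fun s => γ x s) t₀
      = (‖deriv (fun y => γ y t₀) x‖ ^ 2)⁻¹ • deriv (deriv (fun y => γ y t₀)) x) :
    HasDerivAt
      (fun s => ∫ x in (0:ℝ)..1, backHeat x₀ T (γ x s) s * ‖deriv (fun y => γ y s) x‖)
      ((bdry x₀ T γ t₀ 1 - bdry x₀ T γ t₀ 0)
        - ∫ x in (0:ℝ)..1,
            ‖curvature (fun y => γ y t₀) x • normal (fun y => γ y t₀) x
              + ((⟪γ x t₀ - x₀, normal (fun y => γ y t₀) x⟫ / (2 * (T - t₀)))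
                  • normal (fun y => γ y t₀) x)‖ ^ 2
              * backHeat x₀ T (γ x t₀) t₀ * ‖deriv (fun y => γ y t₀) x‖) t₀ := by
  have hπ := Real.pi_pos
  have hq : (0:ℝ) < T - t₀ := sub_pos.mpr ht0
  set f : ℝ × ℝ → E2 := fun p => γ p.1 p.2 with hfdef
  have hγ' : ContDiff ℝ (⊤ : ℕ∞) f := hγ
  set A : ℝ × ℝ → E2 := fun p => fderiv ℝ f p (1, 0) with hAdef
  set B : ℝ × ℝ → E2 := fun p => fderiv ℝ f p (0, 1) with hBdef
  have hAs : ContDiff ℝ (⊤ : ℕ∞) A := smoothA hγ' _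
  have hBs : ContDiff ℝ (⊤ : ℕ∞) B := smoothA hγ' _
  have hu : ∀ x s, deriv (fun y => γ y s) x = A (x, s) := fun x s => (sliceX hγ' x s).deriv
  have hv : ∀ x s, deriv (fun u => γ x u) s = B (x, s) := fun x s => (sliceT hγ' x s).deriv
  have hAc : Continuous A := hAs.continuous
  have hBc : Continuous B := hBs.continuous
  have hfc : Continuous f := hγ'.continuous
  have hMc : Continuous (fun p : ℝ × ℝ => fderiv ℝ A p (0, 1)) := (smoothA hAs _).continuous
  set V : Set (ℝ × ℝ) := {p | p.2 < T ∧ A p ≠ 0} with hVdef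
  have hVopen : IsOpen V := by
    have h1 : IsOpen {p : ℝ × ℝ | p.2 < T} := isOpen_lt continuous_snd continuous_const
    have h2 : IsOpen (A ⁻¹' ({0}ᶜ)) := isOpen_compl_singleton.preimage hAc
    exact h1.inter h2
  have hsubV : Icc (0:ℝ) 1 ×ˢ {t₀} ⊆ V := by
    rintro ⟨x, s⟩ ⟨hx, hs⟩
    have hs' : s = t₀ := hs
    subst hs'
    refine ⟨ht0, ?_⟩
    have := hreg x hx
    rwa [hu] at this
  -- continuity of the heat kernel part
  have hρV : ContinuousOn (fun p : ℝ × ℝ => backHeat x₀ T (f p) p.2) V := by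
    unfold backHeat
    have hnum : Continuous fun p : ℝ × ℝ => -‖f p - x₀‖ ^ 2 :=
      (((hfc.sub continuous_const).norm).pow 2).neg
    have hden : Continuous fun p : ℝ × ℝ => 4 * (T - p.2) :=
      continuous_const.mul (continuous_const.sub continuous_snd)
    have hq1 : ∀ p ∈ V, 4 * (T - p.2) ≠ 0 := by
      intro p hp
      have h3 : (0:ℝ) < T - p.2 := sub_pos.mpr hp.1
      positivity
    have hdiv : ContinuousOn (fun p : ℝ × ℝ => -‖f p - x₀‖ ^ 2 / (4 * (T - p.2))) V :=
      hnum.continuousOn.div hden.continuousOn hq1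
    have hexp := Real.continuous_exp.comp_continuousOn hdiv
    have hsqc : ContinuousOn (fun p : ℝ × ℝ => Real.sqrt (4 * Real.pi * (T - p.2))) V :=
      (Real.continuous_sqrt.comp
        (continuous_const.mul (continuous_const.sub continuous_snd))).continuousOn
    refine hexp.div hsqc ?_
    intro p hp
    have h3 : (0:ℝ) < T - p.2 := sub_pos.mpr hp.1
    exact ne_of_gt (Real.sqrt_pos.mpr (by positivity))
  have hnA : ContinuousOn (fun p : ℝ × ℝ => ‖A p‖) V := hAc.norm.continuousOn
  have hAneV : ∀ p ∈ V, ‖A p‖ ≠ 0 := fun p hp => norm_ne_zero_iff.mpr hp.2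
  -- time derivative of the integrand
  set Φ : ℝ → ℝ → ℝ := fun x s =>
    backHeat x₀ T (f (x, s)) s *
        ((-(2 * ⟪f (x, s) - x₀, B (x, s)⟫) * (T - s) - ‖f (x, s) - x₀‖ ^ 2 * 1) /
            (4 * (T - s) ^ 2) + 1 / (2 * (T - s))) * ‖A (x, s)‖
      + backHeat x₀ T (f (x, s)) s * (⟪fderiv ℝ A (x, s) (0, 1), A (x, s)⟫ / ‖A (x, s)‖)
    with hΦdef
  have hΦcont : ContinuousOn (fun p : ℝ × ℝ => Φ p.1 p.2) V := by
    have hTub : ∀ p ∈ V, (0:ℝ) < T - p.2 := fun p hp => sub_pos.mpr hp.1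
    have c1 : Continuous fun p : ℝ × ℝ => (⟪f p - x₀, B p⟫ : ℝ) :=
      (hfc.sub continuous_const).inner hBc
    have c2 : Continuous fun p : ℝ × ℝ => ‖f p - x₀‖ ^ 2 :=
      ((hfc.sub continuous_const).norm).pow 2
    have c3 : Continuous fun p : ℝ × ℝ => -(2 * ⟪f p - x₀, B p⟫) * (T - p.2)
        - ‖f p - x₀‖ ^ 2 * 1 :=
      (((continuous_const.mul c1).neg).mul (continuous_const.sub continuous_snd)).sub (c2.mul continuous_const)
    have c4 : ContinuousOn (fun p : ℝ × ℝ =>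
        (-(2 * ⟪f p - x₀, B p⟫) * (T - p.2) - ‖f p - x₀‖ ^ 2 * 1) / (4 * (T - p.2) ^ 2)) V := by
      refine c3.continuousOn.div
        (continuous_const.mul ((continuous_const.sub continuous_snd).pow 2)).continuousOn ?_
      intro p hp
      have := hTub p hp
      positivity
    have c5 : ContinuousOn (fun p : ℝ × ℝ => 1 / (2 * (T - p.2))) V := by
      refine continuous_const.continuousOn.div
        (continuous_const.mul (continuous_const.sub continuous_snd)).continuousOn ?_
      intro p hp
      have := hTub p hp
      positivity
    have c6 : Continuous fun p : ℝ × ℝ => (⟪fderiv ℝ A p (0, 1), A p⟫ : ℝ) := hMc.inner hAc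
    have c7 : ContinuousOn (fun p : ℝ × ℝ => (⟪fderiv ℝ A p (0, 1), A p⟫ : ℝ) / ‖A p‖) V :=
      c6.continuousOn.div hnA hAneV
    exact ((hρV.mul (c4.add c5)).mul hnA).add (hρV.mul c7)
  have hdiff : ∀ p ∈ V,
      HasDerivAt (fun u => backHeat x₀ T (γ p.1 u) u * ‖deriv (fun y => γ y u) p.1‖)
        (Φ p.1 p.2) p.2 := by
    rintro ⟨x, s⟩ ⟨hsT, hA0⟩
    have hbh := hasDerivAt_backHeat (x₀ := x₀) (T := T) (c := fun u => γ x u)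
      (c' := B (x, s)) (θ := fun u => u) (θ' := 1) (sliceT hγ' x s) (hasDerivAt_id s) hsT
    have hnrm : HasDerivAt (fun u => ‖A (x, u)‖)
        (⟪fderiv ℝ A (x, s) (0, 1), A (x, s)⟫ / ‖A (x, s)‖) s :=
      hasDerivAt_norm_comp (sliceT hAs x s) hA0
    have hfun : (fun u => backHeat x₀ T (γ x u) u * ‖deriv (fun y => γ y u) x‖)
        = fun u => backHeat x₀ T (γ x u) u * ‖A (x, u)‖ := by
      funext u; rw [hu]
    rw [hfun]
    exact hbh.mul hnrm
  have hFcont : ContinuousOn (fun p : ℝ × ℝ =>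
      backHeat x₀ T (γ p.1 p.2) p.2 * ‖deriv (fun y => γ y p.2) p.1‖) V := by
    have heq : (fun p : ℝ × ℝ => backHeat x₀ T (γ p.1 p.2) p.2 * ‖deriv (fun y => γ y p.2) p.1‖)
        = fun p : ℝ × ℝ => backHeat x₀ T (f p) p.2 * ‖A p‖ := by
      funext p; rw [hu]
    rw [heq]
    exact hρV.mul hnA
  have hparam := param_hasDerivAt
    (F := fun x s => backHeat x₀ T (γ x s) s * ‖deriv (fun y => γ y s) x‖)
    (Φ := Φ) hVopen hsubV hFcont hΦcont hdiff
  -- spatial quantities at time t₀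
  set W : ℝ → E2 := fun y => fderiv ℝ A (y, t₀) (1, 0) with hWdef
  set m : ℝ → E2 := fun y => fderiv ℝ B (y, t₀) (1, 0) with hmdef
  set a : ℝ → E2 := fun y => A (y, t₀) with hadef
  set b : ℝ → E2 := fun y => B (y, t₀) with hbdef
  set z : ℝ → E2 := fun y => f (y, t₀) - x₀ with hzdef
  set ρ : ℝ → ℝ := fun y => backHeat x₀ T (f (y, t₀)) t₀ with hρdef
  set O : Set ℝ := {y : ℝ | (y, t₀) ∈ V} with hOdef
  have hOopen : IsOpen O := hVopen.preimage (continuous_id.prodMk continuous_const)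
  have hIccO : Icc (0:ℝ) 1 ⊆ O := fun x hx => hsubV (mem_prod.mpr ⟨hx, rfl⟩)
  have haO : ∀ y ∈ O, a y ≠ 0 := fun y hy => hy.2
  set E : ℝ → ℝ := fun x =>
    ρ x * ((-(2 * ⟪z x, a x⟫) * (T - t₀) - ‖z x‖ ^ 2 * 0) / (4 * (T - t₀) ^ 2)
        + 0 / (2 * (T - t₀)))
      * ⟪b x + (2 * (T - t₀))⁻¹ • z x, ‖a x‖⁻¹ • a x⟫
    + ρ x * (⟪b x + (2 * (T - t₀))⁻¹ • z x,
          ‖a x‖⁻¹ • W x + (-(⟪W x, a x⟫ / ‖a x‖) / ‖a x‖ ^ 2) • a x⟫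
        + ⟪m x + (2 * (T - t₀))⁻¹ • a x, ‖a x‖⁻¹ • a x⟫) with hEdef
  have hgder : ∀ x ∈ O, HasDerivAt (bdry x₀ T γ t₀) (E x) x := by
    intro x hx
    have hax : a x ≠ 0 := haO x hx
    have hnax : ‖a x‖ ≠ 0 := norm_ne_zero_iff.mpr hax
    have heqf : bdry x₀ T γ t₀ = fun y =>
        ρ y * ⟪b y + (2 * (T - t₀))⁻¹ • z y, ‖a y‖⁻¹ • a y⟫ := by
      funext y
      unfold bdry tangent
      rw [hu, hv]
    rw [heqf]
    have hρ' : HasDerivAt ρ (ρ x * ((-(2 * ⟪z x, a x⟫) * (T - t₀) - ‖z x‖ ^ 2 * 0) /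
        (4 * (T - t₀) ^ 2) + 0 / (2 * (T - t₀)))) x := by
      have h0 := hasDerivAt_backHeat (x₀ := x₀) (T := T) (c := fun y => γ y t₀)
        (c' := a x) (θ := fun _ => t₀) (θ' := 0) (sliceX hγ' x t₀) (hasDerivAt_const x t₀) ht0
      exact h0
    have hz' : HasDerivAt z (a x) x := (sliceX hγ' x t₀).sub_const x₀
    have hb' : HasDerivAt b (m x) x := sliceX hBs x t₀
    have ha' : HasDerivAt a (W x) x := sliceX hAs x t₀
    have hn' : HasDerivAt (fun y => ‖a y‖) (⟪W x, a x⟫ / ‖a x‖) x :=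
      hasDerivAt_norm_comp ha' hax
    have hninv : HasDerivAt (fun y => ‖a y‖⁻¹) (-(⟪W x, a x⟫ / ‖a x‖) / ‖a x‖ ^ 2) x :=
      hn'.inv hnax
    have hτd : HasDerivAt (fun y => ‖a y‖⁻¹ • a y)
        (‖a x‖⁻¹ • W x + (-(⟪W x, a x⟫ / ‖a x‖) / ‖a x‖ ^ 2) • a x) x := hninv.smul ha'
    have hvec : HasDerivAt (fun y => b y + (2 * (T - t₀))⁻¹ • z y)
        (m x + (2 * (T - t₀))⁻¹ • a x) x := hb'.add (hz'.const_smul (2 * (T - t₀))⁻¹)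
    have hI := hvec.inner ℝ hτd
    exact hρ'.mul hI
  -- continuity of E on O
  have hyc : Continuous (fun y : ℝ => (y, t₀)) := continuous_id.prodMk continuous_const
  have hac : Continuous a := hAc.comp hyc
  have hbc : Continuous b := hBc.comp hyc
  have hzc : Continuous z := (hfc.comp hyc).sub continuous_const
  have hWcc : Continuous W := ((smoothA hAs ((1:ℝ), (0:ℝ))).continuous).comp hyc
  have hmcc : Continuous m := ((smoothA hBs ((1:ℝ), (0:ℝ))).continuous).comp hyc
  have hnormO : ∀ y ∈ O, ‖a y‖ ≠ 0 := fun y hy => norm_ne_zero_iff.mpr (haO y hy)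
  have hρc : Continuous ρ := by
    rw [hρdef]
    unfold backHeat
    have h1 : Continuous fun y : ℝ => -‖f (y, t₀) - x₀‖ ^ 2 / (4 * (T - t₀)) :=
      ((((hfc.comp hyc).sub continuous_const).norm.pow 2).neg).div_const _
    exact (Real.continuous_exp.comp h1).div_const _
  have hEcont : ContinuousOn E O := by
    rw [hEdef]
    have hinv : ContinuousOn (fun y => ‖a y‖⁻¹) O :=
      (hac.norm.continuousOn).inv₀ hnormO
    have hτc : ContinuousOn (fun y => ‖a y‖⁻¹ • a y) O := hinv.smul hac.continuousOn
    have hvecc : Continuous (fun y => b y + (2 * (T - t₀))⁻¹ • z y) :=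
      hbc.add (hzc.const_smul (2 * (T - t₀))⁻¹)
    have hI1 : ContinuousOn (fun y =>
        (⟪b y + (2 * (T - t₀))⁻¹ • z y, ‖a y‖⁻¹ • a y⟫ : ℝ)) O :=
      hvecc.continuousOn.inner hτc
    have hQ : Continuous (fun y => ((-(2 * ⟪z y, a y⟫) * (T - t₀) - ‖z y‖ ^ 2 * 0) /
        (4 * (T - t₀) ^ 2) + 0 / (2 * (T - t₀)))) := by
      have hin : Continuous fun y => (⟪z y, a y⟫ : ℝ) := hzc.inner hac
      exact ((((continuous_const.mul hin).neg.mul continuous_const).sub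
        ((hzc.norm.pow 2).mul continuous_const)).div_const _).add continuous_const
    have hWa : Continuous fun y => (⟪W y, a y⟫ : ℝ) := hWcc.inner hac
    have h2 : ContinuousOn (fun y => -(⟪W y, a y⟫ / ‖a y‖) / ‖a y‖ ^ 2) O := by
      exact ((hWa.continuousOn.div hac.norm.continuousOn hnormO).neg).div
        ((hac.norm.pow 2).continuousOn) (fun y hy => pow_ne_zero 2 (hnormO y hy))
    have hτ'c : ContinuousOn (fun y =>
        ‖a y‖⁻¹ • W y + (-(⟪W y, a y⟫ / ‖a y‖) / ‖a y‖ ^ 2) • a y) O :=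
      (hinv.smul hWcc.continuousOn).add (h2.smul hac.continuousOn)
    have hI2 : ContinuousOn (fun y => (⟪b y + (2 * (T - t₀))⁻¹ • z y,
        ‖a y‖⁻¹ • W y + (-(⟪W y, a y⟫ / ‖a y‖) / ‖a y‖ ^ 2) • a y⟫ : ℝ)) O :=
      hvecc.continuousOn.inner hτ'c
    have hI3 : ContinuousOn (fun y =>
        (⟪m y + (2 * (T - t₀))⁻¹ • a y, ‖a y‖⁻¹ • a y⟫ : ℝ)) O :=
      (hmcc.add (hac.const_smul (2 * (T - t₀))⁻¹)).continuousOn.inner hτc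
    exact ((hρc.continuousOn.mul hQ.continuousOn).mul hI1).add
      (hρc.continuousOn.mul (hI2.add hI3))
  set monind : ℝ → ℝ := fun x =>
    ‖curvature (fun y => γ y t₀) x • normal (fun y => γ y t₀) x
      + ((⟪γ x t₀ - x₀, normal (fun y => γ y t₀) x⟫ / (2 * (T - t₀)))
          • normal (fun y => γ y t₀) x)‖ ^ 2
      * backHeat x₀ T (γ x t₀) t₀ * ‖deriv (fun y => γ y t₀) x‖ with hmonind
  have hkey : ∀ x ∈ Icc (0:ℝ) 1, Φ x t₀ = E x - monind x := by
    intro x hx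
    have hxO : x ∈ O := hIccO hx
    have hax : a x ≠ 0 := haO x hxO
    have hnpos : (0:ℝ) < ‖a x‖ := norm_pos_iff.mpr hax
    have hnne : ‖a x‖ ≠ 0 := ne_of_gt hnpos
    have hdd : deriv (deriv (fun y => γ y t₀)) x = W x := by
      have h1 : deriv (fun y => γ y t₀) = fun y => A (y, t₀) := funext fun y => hu y t₀
      rw [h1]
      exact (sliceX hAs x t₀).deriv
    have hbmot : b x = (‖a x‖ ^ 2)⁻¹ • W x := by
      have h2 := hmot x hx
      rw [hv, hu, hdd] at h2
      exact h2
    have hsymmAB : fderiv ℝ A (x, t₀) ((0:ℝ), (1:ℝ)) = m x := by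
      show fderiv ℝ A (x, t₀) ((0:ℝ), (1:ℝ)) = fderiv ℝ B (x, t₀) ((1:ℝ), (0:ℝ))
      rw [hAdef, hBdef]
      exact symm2 hγ' (x, t₀) _ _
    set τv : E2 := ‖a x‖⁻¹ • a x with hτvdef
    set νv : E2 := rot τv with hνvdef
    have hτ1 : ‖τv‖ = 1 := by
      rw [hτvdef, norm_smul, norm_inv, norm_norm]
      exact inv_mul_cancel₀ hnne
    have hν1 : ‖νv‖ = 1 := by rw [hνvdef, norm_rot]; exact hτ1
    have htan : tangent (fun y => γ y t₀) x = τv := by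
      unfold tangent; rw [hu]
    have hnor : normal (fun y => γ y t₀) x = νv := by
      unfold normal; rw [htan]
    have hcurv : curvature (fun y => γ y t₀) x = ⟪W x, νv⟫ / ‖a x‖ ^ 2 := by
      unfold curvature; rw [hdd, hnor, hu]
    have haτ : ⟪a x, τv⟫ = ‖a x‖ := by
      rw [hτvdef, real_inner_smul_right, real_inner_self_eq_norm_sq, sq]
      field_simp
    have haν : ⟪a x, νv⟫ = 0 := by
      rw [hνvdef, hτvdef, rot_smul, real_inner_smul_right, inner_rot_self]
      ring
    have hza : ⟪z x, a x⟫ = ⟪z x, τv⟫ * ‖a x‖ := by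
      rw [inner_decomp hτ1 (z x) (a x), ← hνvdef, haτ, haν]
      ring
    have hWa2 : ⟪W x, a x⟫ = ⟪W x, τv⟫ * ‖a x‖ := by
      rw [inner_decomp hτ1 (W x) (a x), ← hνvdef, haτ, haν]
      ring
    have hzW : ⟪z x, W x⟫ = ⟪z x, τv⟫ * ⟪W x, τv⟫ + ⟪z x, νv⟫ * ⟪W x, νv⟫ := by
      rw [inner_decomp hτ1 (z x) (W x), ← hνvdef]
    have hWW : ⟪W x, W x⟫ = ⟪W x, τv⟫ ^ 2 + ⟪W x, νv⟫ ^ 2 := by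
      rw [inner_decomp hτ1 (W x) (W x), ← hνvdef]
      ring
    have haa : ⟪a x, a x⟫ = ‖a x‖ ^ 2 := real_inner_self_eq_norm_sq _
    have hzz : ‖z x‖ ^ 2 = ⟪z x, τv⟫ ^ 2 + ⟪z x, νv⟫ ^ 2 := by
      rw [← real_inner_self_eq_norm_sq, inner_decomp hτ1 (z x) (z x), ← hνvdef]
      ring
    have hmon2 : monind x
        = (⟪W x, νv⟫ / ‖a x‖ ^ 2 + ⟪z x, νv⟫ / (2 * (T - t₀))) ^ 2 * ρ x * ‖a x‖ := by
      rw [hmonind]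
      simp only
      rw [hcurv, hnor, hu,
        show γ x t₀ - x₀ = z x from rfl,
        show backHeat x₀ T (γ x t₀) t₀ = ρ x from rfl,
        ← add_smul, norm_smul, hν1, mul_one, Real.norm_eq_abs, sq_abs]
    rw [hmon2]
    simp only [hΦdef, hEdef]
    rw [hsymmAB]
    exact key_algebra (T - t₀) hq (ρ x) (a x) (z x) (W x) (m x) (b x) hnne hbmot
  -- final assembly
  have hΦt₀cont : ContinuousOn (fun x => Φ x t₀) (Icc (0:ℝ) 1) := by
    have hc : ContinuousOn (fun x : ℝ => (x, t₀)) (Icc (0:ℝ) 1) :=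
      (continuous_id.prodMk continuous_const).continuousOn
    have h2 := hΦcont.comp hc (fun x (hx : x ∈ Icc (0:ℝ) 1) => hIccO hx)
    exact h2
  have hEIcc : ContinuousOn E (Icc (0:ℝ) 1) := hEcont.mono hIccO
  have hmoncont : ContinuousOn monind (Icc (0:ℝ) 1) := by
    refine (hEIcc.sub hΦt₀cont).congr ?_
    intro x hx
    have h := hkey x hx
    simp only [Pi.sub_apply]
    linarith
  have hintE : IntervalIntegrable E volume 0 1 := by
    apply ContinuousOn.intervalIntegrable
    rwa [uIcc_of_le (by norm_num : (0:ℝ) ≤ 1)]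
  have hintmon : IntervalIntegrable monind volume 0 1 := by
    apply ContinuousOn.intervalIntegrable
    rwa [uIcc_of_le (by norm_num : (0:ℝ) ≤ 1)]
  have hftc : ∫ x in (0:ℝ)..1, E x = bdry x₀ T γ t₀ 1 - bdry x₀ T γ t₀ 0 := by
    apply intervalIntegral.integral_eq_sub_of_hasDerivAt
    · intro x hx
      exact hgder x (hIccO (by rwa [uIcc_of_le (by norm_num : (0:ℝ) ≤ 1)] at hx))
    · exact hintE
  have hcongr : ∫ x in (0:ℝ)..1, Φ x t₀ = ∫ x in (0:ℝ)..1, (E x - monind x) := by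
    apply intervalIntegral.integral_congr
    intro x hx
    rw [uIcc_of_le (by norm_num : (0:ℝ) ≤ 1)] at hx
    exact hkey x hx
  have hsub2 : ∫ x in (0:ℝ)..1, (E x - monind x)
      = (∫ x in (0:ℝ)..1, E x) - ∫ x in (0:ℝ)..1, monind x :=
    intervalIntegral.integral_sub hintE hintmon
  have hval : ∫ x in (0:ℝ)..1, Φ x t₀
      = (bdry x₀ T γ t₀ 1 - bdry x₀ T γ t₀ 0) - ∫ x in (0:ℝ)..1, monind x := by
    rw [hcongr, hsub2, hftc]
  rw [← hval]
  exact hparam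


theorem deriv_slice_eq {γ δ : ℝ → ℝ → E2}
    (hγ : ContDiff ℝ (⊤ : ℕ∞) fun p : ℝ × ℝ => γ p.1 p.2)
    (hδ : ContDiff ℝ (⊤ : ℕ∞) fun p : ℝ × ℝ => δ p.1 p.2)
    {a b Tv : ℝ} (hT : 0 < Tv) (heq : ∀ s ∈ Ico (0:ℝ) Tv, γ a s = δ b s)
    {t : ℝ} (ht : t ∈ Ico (0:ℝ) Tv) :
    deriv (fun s => γ a s) t = deriv (fun s => δ b s) t := by
  have hc : Continuous (fun s => deriv (fun s' => γ a s') s) := by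
    have h1 : (fun s => deriv (fun s' => γ a s') s)
        = fun s => fderiv ℝ (fun p : ℝ × ℝ => γ p.1 p.2) (a, s) ((0:ℝ), (1:ℝ)) :=
      funext fun s => (sliceT hγ a s).deriv
    rw [h1]
    exact ((smoothA hγ _).continuous).comp (continuous_const.prodMk continuous_id)
  have hd : Continuous (fun s => deriv (fun s' => δ b s') s) := by
    have h1 : (fun s => deriv (fun s' => δ b s') s)
        = fun s => fderiv ℝ (fun p : ℝ × ℝ => δ p.1 p.2) (b, s) ((0:ℝ), (1:ℝ)) :=
      funext fun s => (sliceT hδ b s).deriv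
    rw [h1]
    exact ((smoothA hδ _).continuous).comp (continuous_const.prodMk continuous_id)
  have hEq : EqOn (fun s => deriv (fun s' => γ a s') s)
      (fun s => deriv (fun s' => δ b s') s) (Ioo 0 Tv) := by
    intro s hs
    have hev : (fun s' => γ a s') =ᶠ[nhds s] (fun s' => δ b s') := by
      filter_upwards [Ioo_mem_nhds hs.1 hs.2] with u hu
      exact heq u ⟨hu.1.le, hu.2⟩
    exact hev.deriv_eq
  have hcl := hEq.closure hc hd
  have htc : t ∈ closure (Ioo 0 Tv) := by
    rw [closure_Ioo (ne_of_lt hT)]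
    exact ⟨ht.1, ht.2.le⟩
  exact hcl htc


/-- Huisken's monotonicity formula for a spoon-shaped network
evolving by curvature with fixed end point `P`. -/
theorem monotonicity_formula (Ω : Set E2) (P : E2) (T : ℝ)
    (Γ : SpoonFlow Ω P T) (x₀ : E2) :
    ∀ t ∈ Set.Ico (0:ℝ) T,
      HasDerivAt (fun s => Γ.heatInt x₀ s)
        (-Γ.monInt x₀ t
          + ⟪(2 * (T - t))⁻¹ • (P - x₀), tangent (fun y => Γ.γ₂ y t) 1⟫
            * backHeat x₀ T P t) t := by

  intro t ht
  have ht0 := ht.1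
  have htT := ht.2
  have hTpos : 0 < T := lt_of_le_of_lt ht0 htT
  have h1 := one_curve x₀ Γ.smooth₁ htT (fun x hx => Γ.regular₁ x hx t ht)
    (fun x hx => Γ.motion₁ x hx t ht)
  have h2 := one_curve x₀ Γ.smooth₂ htT (fun x hx => Γ.regular₂ x hx t ht)
    (fun x hx => Γ.motion₂ x hx t ht)
  have hsum := h1.add h2
  have hO1 : Γ.γ₁ 0 t = Γ.γ₁ 1 t := Γ.closed₁ t ht
  have hO2 : Γ.γ₂ 0 t = Γ.γ₁ 0 t := (Γ.concurrency t ht).symm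
  have hP : Γ.γ₂ 1 t = P := Γ.endPoint t ht
  have hv11 : deriv (fun s => Γ.γ₁ 1 s) t = deriv (fun s => Γ.γ₁ 0 s) t :=
    (deriv_slice_eq Γ.smooth₁ Γ.smooth₁ hTpos (fun s hs => Γ.closed₁ s hs) ht).symm
  have hv12 : deriv (fun s => Γ.γ₂ 0 s) t = deriv (fun s => Γ.γ₁ 0 s) t := by
    have := deriv_slice_eq Γ.smooth₁ Γ.smooth₂ hTpos (fun s hs => Γ.concurrency s hs) ht
    exact this.symm
  have hvP : deriv (fun s => Γ.γ₂ 1 s) t = 0 := by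
    have hconst : ContDiff ℝ (⊤ : ℕ∞) (fun p : ℝ × ℝ => (fun (_ : ℝ) (_ : ℝ) => P) p.1 p.2) :=
      contDiff_const
    have h := deriv_slice_eq (δ := fun _ _ => P) (b := 1) Γ.smooth₂ hconst hTpos (fun s hs => Γ.endPoint s hs) ht
    rw [h]
    exact deriv_const t P
  have hangle := Γ.angle t ht
  have hzero : (⟪deriv (fun s => Γ.γ₁ 0 s) t + (2 * (T - t))⁻¹ • (Γ.γ₁ 0 t - x₀),
      tangent (fun y => Γ.γ₁ y t) 0⟫ : ℝ)
      - ⟪deriv (fun s => Γ.γ₁ 0 s) t + (2 * (T - t))⁻¹ • (Γ.γ₁ 0 t - x₀),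
          tangent (fun y => Γ.γ₁ y t) 1⟫
      + ⟪deriv (fun s => Γ.γ₁ 0 s) t + (2 * (T - t))⁻¹ • (Γ.γ₁ 0 t - x₀),
          tangent (fun y => Γ.γ₂ y t) 0⟫ = 0 := by
    have h := congrArg (fun v : E2 =>
      (⟪deriv (fun s => Γ.γ₁ 0 s) t + (2 * (T - t))⁻¹ • (Γ.γ₁ 0 t - x₀), v⟫ : ℝ)) hangle
    simpa [inner_sub_right, inner_add_right] using h
  have hbsum : (bdry x₀ T Γ.γ₁ t 1 - bdry x₀ T Γ.γ₁ t 0)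
      + (bdry x₀ T Γ.γ₂ t 1 - bdry x₀ T Γ.γ₂ t 0)
      = ⟪(2 * (T - t))⁻¹ • (P - x₀), tangent (fun y => Γ.γ₂ y t) 1⟫
          * backHeat x₀ T P t := by
    unfold bdry
    rw [← hO1, hO2, hP, hv11, hv12, hvP, zero_add]
    linear_combination (-(backHeat x₀ T (Γ.γ₁ 0 t) t)) * hzero
  have hfun : (fun s => (∫ x in (0:ℝ)..1, backHeat x₀ T (Γ.γ₁ x s) s
        * ‖deriv (fun y => Γ.γ₁ y s) x‖)
      + ∫ x in (0:ℝ)..1, backHeat x₀ T (Γ.γ₂ x s) s * ‖deriv (fun y => Γ.γ₂ y s) x‖)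
      = fun s => Γ.heatInt x₀ s := rfl
  change HasDerivAt (fun s => Γ.heatInt x₀ s) _ t at hsum
  convert hsum using 1
  unfold SpoonFlow.monInt
  linarith [hbsum]
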